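/- Let P be a finite connected poset with at least two maximal elements that contains none of R1, R2, and R3 as a peak-subposet. If every maximal element of P has exactly two neighbors, then P contains the crown R_{4,n} as a peak-subposet for some n ≥ 0. -/

import Mathlib

/-! ## Relation-based poset notions -/

/-- `x` and `y` are incomparable with respect to the relation `le`. -/
def RIncomp {α : Type*} (le : α → α → Prop) (x y : α) : Prop := ¬ le x y ∧ ¬ le y x

/-- The strict relation associated to `le`. -/
def RLt {α : Type*} (le : α → α → Prop) (x y : α) : Prop := le x y ∧ ¬ le y x

/-- `z` is a maximal element with respect to `le`. -/
def RIsMax {α : Type*} (le : α → α → Prop) (z : α) : Prop := ∀ x, le z x → le x z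

/-- `z` is a minimal element with respect to `le`. -/
def RIsMin {α : Type*} (le : α → α → Prop) (z : α) : Prop := ∀ x, le x z → le z x

/-- The down-cone `D(a) = {x | x ≤ a}`. -/
def RDown {α : Type*} (le : α → α → Prop) (a : α) : Set α := {x | le x a}

/-- The comparability graph of the relation `le`: vertices are the elements,
edges join comparable distinct elements. -/
def RCompGraph {α : Type*} (le : α → α → Prop) : SimpleGraph α where
  Adj x y := x ≠ y ∧ (le x y ∨ le y x)
  symm := ⟨fun x y h => ⟨Ne.symm h.1, h.2.symm⟩⟩
  loopless := ⟨fun x h => h.1 rfl⟩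

/-- Connectedness of the comparability graph. -/
def RConnected {α : Type*} (le : α → α → Prop) : Prop := (RCompGraph le).Connected

/-- `P` contains `R1` as a peak-subposet: a maximal element `z` together with three
distinct pairwise incomparable elements strictly below `z`. -/
def ContainsR1 {α : Type*} (le : α → α → Prop) : Prop :=
  ∃ z a b c : α, RIsMax le z ∧ a ≠ b ∧ a ≠ c ∧ b ≠ c ∧
    RIncomp le a b ∧ RIncomp le a c ∧ RIncomp le b c ∧
    RLt le a z ∧ RLt le b z ∧ RLt le c z

/-- `P` contains `R2` as a peak-subposet: distinct maximal `z ≠ z'` and elements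
`y < x` with `x < z` and `x < z'`. -/
def ContainsR2 {α : Type*} (le : α → α → Prop) : Prop :=
  ∃ z z' y x : α, RIsMax le z ∧ RIsMax le z' ∧ z ≠ z' ∧
    RLt le y x ∧ RLt le x z ∧ RLt le x z'

/-- `P` contains `R3` as a peak-subposet: three distinct maximal elements with a
common strict lower bound. -/
def ContainsR3 {α : Type*} (le : α → α → Prop) : Prop :=
  ∃ z₁ z₂ z₃ x : α, RIsMax le z₁ ∧ RIsMax le z₂ ∧ RIsMax le z₃ ∧
    z₁ ≠ z₂ ∧ z₁ ≠ z₃ ∧ z₂ ≠ z₃ ∧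
    RLt le x z₁ ∧ RLt le x z₂ ∧ RLt le x z₃

/-- `P` contains the crown `R_{4,n}` as a peak-subposet (with `m = n + 2` maximal
elements `z i` and `m` pairwise incomparable elements `x i`, indices mod `m`). -/
def ContainsCrown {α : Type*} (le : α → α → Prop) (n : ℕ) : Prop :=
  ∃ z x : Fin (n + 2) → α,
    Function.Injective z ∧ Function.Injective x ∧
    (∀ j, RIsMax le (z j)) ∧
    (∀ i j, x i ≠ z j) ∧
    (∀ i j, i ≠ j → RIncomp le (x i) (x j)) ∧
    (∀ i j, RLt le (x i) (z j) ↔ (j = i ∨ j = i - 1))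

/-- A poset (given by its order relation `le`) is of type `A`: it is connected and
contains none of `R1`, `R2`, `R3` and the crowns `R_{4,n}` as a peak-subposet. -/
def IsTypeA {α : Type*} (le : α → α → Prop) : Prop :=
  RConnected le ∧ ¬ ContainsR1 le ∧ ¬ ContainsR2 le ∧ ¬ ContainsR3 le ∧
    ∀ n : ℕ, ¬ ContainsCrown le n

/-- The set of neighbors of a maximal element `z`: maximal elements `z' ≠ z` whose
down-cone meets the down-cone of `z`. -/
def NeighborSet {α : Type*} (le : α → α → Prop) (z : α) : Set α :=
  {z' | RIsMax le z' ∧ z' ≠ z ∧ (RDown le z ∩ RDown le z').Nonempty}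

/-! ## Quivers of type `A_n` and alien sets -/

/-- A quiver of type `A_n`: vertices `Fin n`, and for each pair of consecutive
vertices exactly one arrow joining them (in one of the two orientations), and no
other arrows. -/
structure TypeAQuiver (n : ℕ) where
  arr : Fin n → Fin n → Prop
  adjacent : ∀ x y : Fin n, arr x y → (y.val = x.val + 1 ∨ x.val = y.val + 1)
  exactlyOne : ∀ x y : Fin n, y.val = x.val + 1 → (arr x y ↔ ¬ arr y x)

/-- `z` is a sink: no arrow starts at `z`. -/
def IsSinkQ {n : ℕ} (Q : TypeAQuiver n) (z : Fin n) : Prop := ∀ y, ¬ Q.arr z y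

/-- `z` is a source: no arrow ends at `z`. -/
def IsSourceQ {n : ℕ} (Q : TypeAQuiver n) (z : Fin n) : Prop := ∀ y, ¬ Q.arr y z

/-- `Supp I(z)`: the set of vertices admitting a directed path to `z` in `Q`. -/
def SuppI {n : ℕ} (Q : TypeAQuiver n) (z : Fin n) : Set (Fin n) :=
  {x | Relation.ReflTransGen Q.arr x z}

/-- The arrow relation of the quiver `Q^F` obtained from `Q` by adding the extra
arrows in `F` (an extra arrow is recorded as the pair (source, target)). -/
def QFarr {n : ℕ} (Q : TypeAQuiver n) (F : Set (Fin n × Fin n)) :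
    Fin n → Fin n → Prop :=
  fun x y => Q.arr x y ∨ (x, y) ∈ F

/-- `F` is an alien set for the type `A_n` quiver `Q`. -/
structure IsAlienSet {n : ℕ} (Q : TypeAQuiver n) (F : Set (Fin n × Fin n)) : Prop where
  /-- (a) Source and target of each extra arrow lie in `Supp I(z)` for some sink `z`. -/
  sameSupp : ∀ p ∈ F, ∃ z : Fin n, IsSinkQ Q z ∧ p.1 ∈ SuppI Q z ∧ p.2 ∈ SuppI Q z
  /-- (b) The target of an extra arrow is not a source of `Q`, unless it is extremal. -/
  targetNotSource : ∀ p ∈ F, IsSourceQ Q p.2 → (p.2.val = 0 ∨ p.2.val = n - 1)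
  /-- (c) Each extra arrow is the unique directed path in `Q^F` from its source to
  its target: every such path is the single arrow itself. -/
  uniquePath : ∀ p ∈ F, ∀ l : List (Fin n),
    List.Chain (QFarr Q F) p.1 (l ++ [p.2]) → l = []
  /-- (d) `Q^F` is acyclic. -/
  acyclic : ∀ x : Fin n, ¬ Relation.TransGen (QFarr Q F) x x

/-- The order relation of the poset `P_{Q^F}` associated to the acyclic quiver
`Q^F`: `x ≤ y` iff there is a (possibly trivial) directed path from `x` to `y`. -/
def leQF {n : ℕ} (Q : TypeAQuiver n) (F : Set (Fin n × Fin n)) :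
    Fin n → Fin n → Prop :=
  Relation.ReflTransGen (QFarr Q F)

/-!
The neighbour relation makes the maximal elements a finite graph in which every vertex has degree
two, so it contains a cycle `z₀, …, z_{m-1}` with `m ≥ 3`. Pick a common lower bound `xᵢ` of `z_{i-1}` and `zᵢ`. Since `R3` is
excluded, `xᵢ` lies below no other `zⱼ`; since `R2` is excluded, `xᵢ < xⱼ` is impossible, and
`xᵢ = xⱼ` would put `xᵢ` below three of the `z`'s. Hence the `xᵢ` and `zᵢ` form a crown.
-/

namespace SimpleGraph

variable {V : Type*} {G : SimpleGraph V}

theorem IsCycles.exists_isCycle [Finite V] (h : G.IsCycles) {v w : V} (hadj : G.Adj v w) :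
    ∃ p : G.Walk v v, p.IsCycle :=
  let ⟨p, hp, _⟩ := h.exists_cycle_toSubgraph_verts_eq_connectedComponentSupp
    ((G.connectedComponentMk v).mem_supp_iff v |>.2 rfl) ⟨w, hadj⟩
  ⟨p, hp⟩

theorem Walk.IsCycle.exists_injective_fin {u : V} {p : G.Walk u u} (hp : p.IsCycle) :
    ∃ n, ∃ z : Fin (n + 3) → V, Function.Injective z ∧ ∀ i, G.Adj (z i) (z (i + 1)) := by
  obtain ⟨n, hn⟩ : ∃ n, p.length = n + 3 := ⟨p.length - 3, by have := hp.three_le_length; omega⟩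
  refine ⟨n, fun i => p.getVert i, fun i j hij => Fin.ext ?_, fun i => ?_⟩
  · exact hp.getVert_injOn' (by simp only [Set.mem_ofPred_eq]; omega)
      (by simp only [Set.mem_ofPred_eq]; omega) hij
  · have hsucc : p.getVert ↑(i + 1) = p.getVert (i + 1) := by
      rw [Fin.val_add_one]
      split_ifs with hi
      · rw [p.getVert_zero, p.getVert_of_length_le (by simp [hi, hn])]
      · rfl
    simpa only [hsucc] using p.adj_getVert_succ (by omega : (i : ℕ) < p.length)

end SimpleGraph

section PeakSubposets

variable {P : Type*}

theorem rLt_iff_lt [Preorder P] {x y : P} : RLt (fun x y : P => x ≤ y) x y ↔ x < y :=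
  lt_iff_le_not_ge.symm

def neighborGraph (P : Type*) [LE P] : SimpleGraph {z : P // IsMax z} where
  Adj z w := z ≠ w ∧ ∃ c, c ≤ z.1 ∧ c ≤ w.1
  symm := ⟨fun _ _ ⟨hne, c, hcz, hcw⟩ => ⟨hne.symm, c, hcw, hcz⟩⟩
  loopless := ⟨fun _ h => h.1 rfl⟩

theorem neighborGraph_adj [LE P] {z w : {z : P // IsMax z}} :
    (neighborGraph P).Adj z w ↔ z ≠ w ∧ ∃ c, c ≤ z.1 ∧ c ≤ w.1 :=
  Iff.rfl

theorem ncard_neighborSet_neighborGraph [LE P] (z : {z : P // IsMax z}) :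
    ((neighborGraph P).neighborSet z).ncard = (NeighborSet (fun x y : P => x ≤ y) z.1).ncard := by
  rw [← Set.ncard_image_of_injective _ Subtype.val_injective]
  congr 1
  ext w
  constructor
  · rintro ⟨w, hadj, rfl⟩
    obtain ⟨hne, c, hcz, hcw⟩ := neighborGraph_adj.1 hadj
    exact ⟨w.2, fun h => hne (Subtype.ext h).symm, c, hcz, hcw⟩
  · rintro ⟨hw, hne, c, hcz, hcw⟩
    exact ⟨⟨w, hw⟩, neighborGraph_adj.2 ⟨fun h => hne (congrArg Subtype.val h).symm, c, hcz, hcw⟩,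
      rfl⟩

variable [PartialOrder P]

theorem IsMax.lt_of_le_of_le_of_ne {a b x : P} (ha : IsMax a) (hab : a ≠ b) (hxa : x ≤ a)
    (hxb : x ≤ b) : x < a :=
  hxa.lt_of_ne fun h => hab (ha.eq_of_le (h ▸ hxb))

theorem containsR2_of_lt_of_le_of_le {a b x y : P} (ha : IsMax a) (hb : IsMax b) (hab : a ≠ b)
    (hyx : y < x) (hxa : x ≤ a) (hxb : x ≤ b) : ContainsR2 (fun x y : P => x ≤ y) :=
  ⟨a, b, y, x, ha, hb, hab, rLt_iff_lt.2 hyx, rLt_iff_lt.2 (ha.lt_of_le_of_le_of_ne hab hxa hxb),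
    rLt_iff_lt.2 (hb.lt_of_le_of_le_of_ne hab.symm hxb hxa)⟩

theorem containsR3_of_le_of_le_of_le {a b c x : P} (ha : IsMax a) (hb : IsMax b) (hc : IsMax c)
    (hab : a ≠ b) (hac : a ≠ c) (hbc : b ≠ c) (hxa : x ≤ a) (hxb : x ≤ b) (hxc : x ≤ c) :
    ContainsR3 (fun x y : P => x ≤ y) :=
  ⟨a, b, c, x, ha, hb, hc, hab, hac, hbc, rLt_iff_lt.2 (ha.lt_of_le_of_le_of_ne hab hxa hxb),
    rLt_iff_lt.2 (hb.lt_of_le_of_le_of_ne hab.symm hxb hxa),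
    rLt_iff_lt.2 (hc.lt_of_le_of_le_of_ne hac.symm hxc hxa)⟩

theorem containsCrown_of_cycle (hR2 : ¬ ContainsR2 (fun x y : P => x ≤ y))
    (hR3 : ¬ ContainsR3 (fun x y : P => x ≤ y)) {n : ℕ} {z x : Fin (n + 3) → P}
    (hz : Function.Injective z) (hmax : ∀ i, IsMax (z i)) (hxz : ∀ i, x i ≤ z i)
    (hxz' : ∀ i, x i ≤ z (i - 1)) : ContainsCrown (fun x y : P => x ≤ y) (n + 1) := by
  have hpred : ∀ i : Fin (n + 3), i - 1 ≠ i := by simp [sub_eq_self]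
  have hle_iff : ∀ i j, x i ≤ z j ↔ j = i ∨ j = i - 1 := by
    refine fun i j => ⟨fun hxj => ?_, by rintro (rfl | rfl) <;> simp only [hxz, hxz']⟩
    by_contra! hj
    exact hR3 <| containsR3_of_le_of_le_of_le (hmax i) (hmax (i - 1)) (hmax j)
      (hz.ne (hpred i).symm) (hz.ne (Ne.symm hj.1)) (hz.ne (Ne.symm hj.2)) (hxz i) (hxz' i) hxj
  have hlt : ∀ i, x i < z i := fun i =>
    (hmax i).lt_of_le_of_le_of_ne (hz.ne (hpred i).symm) (hxz i) (hxz' i)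
  have hnle : ∀ i j, i ≠ j → ¬ x i ≤ x j := by
    intro i j hij hle
    obtain heq | hlt := hle.eq_or_lt
    · have hji : j = i - 1 := ((hle_iff i j).1 (heq ▸ hxz j)).resolve_left hij.symm
      have hij' : i = j - 1 := ((hle_iff j i).1 (heq ▸ hxz i)).resolve_left hij
      rw [hji, sub_sub, eq_comm, sub_eq_self] at hij'
      simp [Fin.ext_iff, Fin.val_add, Nat.mod_eq_of_lt (show 2 < n + 3 by omega)] at hij'
    · exact hR2 (containsR2_of_lt_of_le_of_le (hmax j) (hmax (j - 1)) (hz.ne (hpred j).symm) hlt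
        (hxz j) (hxz' j))
  refine ⟨z, x, hz, fun i j h => by_contra fun hij => hnle i j hij h.le, hmax,
    fun i j h => (hmax j).not_lt (h ▸ hlt i), fun i j hij => ⟨hnle i j hij, hnle j i (Ne.symm hij)⟩,
    fun i j => ?_⟩
  rw [rLt_iff_lt, ← hle_iff]
  exact ⟨le_of_lt, fun h => h.lt_of_ne fun heq => (hmax j).not_lt (heq ▸ hlt i)⟩

end PeakSubposets

theorem crown_of_all_maximal_have_two_neighbors_general {P : Type*} [Fintype P] [PartialOrder P]
    (htwo : ∃ z w : P, RIsMax (fun x y : P => x ≤ y) z ∧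
      RIsMax (fun x y : P => x ≤ y) w ∧ z ≠ w)
    (hR2 : ¬ ContainsR2 (fun x y : P => x ≤ y))
    (hR3 : ¬ ContainsR3 (fun x y : P => x ≤ y))
    (hall : ∀ z : P, RIsMax (fun x y : P => x ≤ y) z →
      (NeighborSet (fun x y : P => x ≤ y) z).ncard = 2) :
    ∃ n : ℕ, ContainsCrown (fun x y : P => x ≤ y) n := by
  obtain ⟨z₀, -, hz₀, -, -⟩ := htwo
  have hcycles : (neighborGraph P).IsCycles := fun z _ =>
    (ncard_neighborSet_neighborGraph z).trans (hall z z.2)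
  obtain ⟨w, hw⟩ : ((neighborGraph P).neighborSet ⟨z₀, hz₀⟩).Nonempty :=
    Set.nonempty_of_ncard_ne_zero <| by
      rw [ncard_neighborSet_neighborGraph, hall z₀ hz₀]; exact two_ne_zero
  obtain ⟨p, hp⟩ := hcycles.exists_isCycle hw
  obtain ⟨n, z, hz, hadj⟩ := hp.exists_injective_fin
  choose x hx using fun i => (neighborGraph_adj.1 (hadj (i - 1))).2
  refine ⟨n + 1, containsCrown_of_cycle hR2 hR3 (Subtype.val_injective.comp hz) (fun i => (z i).2)
    (fun i => ?_) (fun i => (hx i).1)⟩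
  simpa only [Function.comp_apply, sub_add_cancel] using (hx i).2

/-- Let `P` be a finite connected poset with at least two maximal
elements containing none of `R1`, `R2`, `R3` as a peak-subposet. If every maximal
element has exactly two neighbors, then `P` contains a crown `R_{4,n}` as a
peak-subposet. -/
theorem crown_of_all_maximal_have_two_neighbors {P : Type*} [Fintype P] [PartialOrder P]
    (hconn : RConnected (fun x y : P => x ≤ y))
    (htwo : ∃ z w : P, RIsMax (fun x y : P => x ≤ y) z ∧
      RIsMax (fun x y : P => x ≤ y) w ∧ z ≠ w)
    (hR1 : ¬ ContainsR1 (fun x y : P => x ≤ y))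
    (hR2 : ¬ ContainsR2 (fun x y : P => x ≤ y))
    (hR3 : ¬ ContainsR3 (fun x y : P => x ≤ y))
    (hall : ∀ z : P, RIsMax (fun x y : P => x ≤ y) z →
      (NeighborSet (fun x y : P => x ≤ y) z).ncard = 2) :
    ∃ n : ℕ, ContainsCrown (fun x y : P => x ≤ y) n :=
  crown_of_all_maximal_have_two_neighbors_general htwo hR2 hR3 hall
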